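/- Let A and B be complex polynomials with deg A = N ≥ 1, deg B = K ≥ 1, ‖A‖ ≤ 1, ‖B‖ ≤ 1, and no common zeros. Then δ(A,B)/3^{max(N,K)} ≤ δ̃(A,B) ≤ δ(A,B), where δ̃(A,B) := inf{|A(z)| + |B(z)| : z ∈ ℂ}. -/

import Mathlib

/-!
If `α` is the zero of `A B` nearest to `z`, say a root of `A`, then every root `β` of `B`
satisfies `|α - β| ≤ |α - z| + |z - β| ≤ 2 |z - β|`; multiplying over the `deg B` linear
factors of `B` gives `δ(A,B) ≤ |B(α)| ≤ 2^(deg B) |B(z)|`. The other inequality holds because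
`δ̃` is an infimum over a larger set.
-/

open Polynomial

/-- `‖p‖` in the paper. -/
noncomputable def polyNorm (p : Polynomial ℂ) : ℝ :=
  ⨆ k : ℕ, ‖p.coeff k‖

/-- `δ(A,B)` in the paper. -/
noncomputable def bezoutDelta (A B : Polynomial ℂ) : ℝ :=
  sInf ((fun z : ℂ => ‖A.eval z‖ + ‖B.eval z‖) ''
    {z : ℂ | A.eval z = 0 ∨ B.eval z = 0})

/-- `δ̃(A,B)` in the paper. -/
noncomputable def deltaTilde (A B : Polynomial ℂ) : ℝ :=
  ⨅ z : ℂ, (‖A.eval z‖ + ‖B.eval z‖)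

theorem Polynomial.Splits.norm_eval_le_two_pow_mul_norm_eval {K : Type*} [NormedField K]
    {p : K[X]} (hp : p.Splits) {z α : K} (hα : ∀ β ∈ p.roots, ‖z - α‖ ≤ ‖z - β‖) :
    ‖p.eval α‖ ≤ 2 ^ p.natDegree * ‖p.eval z‖ := by
  have norm_prod (w : K) : ‖(p.roots.map (w - ·)).prod‖ = (p.roots.map (‖w - ·‖)).prod := by
    rw [← normHom_apply, map_multiset_prod, Multiset.map_map]
    rfl
  have factor_le : (p.roots.map (‖α - ·‖)).prod ≤ (p.roots.map (2 * ‖z - ·‖)).prod := by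
    refine Multiset.prod_map_le_prod_map₀ _ _ (fun _ _ => norm_nonneg _) fun β hβ => ?_
    calc ‖α - β‖ ≤ ‖z - α‖ + ‖z - β‖ := norm_sub_rev α z ▸ norm_sub_le_norm_sub_add_norm_sub α z β
      _ ≤ 2 * ‖z - β‖ := by linarith [hα β hβ]
  rw [hp.eval_eq_prod_roots, hp.eval_eq_prod_roots, norm_mul, norm_mul, norm_prod, norm_prod,
    mul_left_comm, hp.natDegree_eq_card_roots, ← Multiset.prod_replicate, ← Multiset.map_const',
    ← Multiset.prod_map_mul]
  gcongr

section Deltas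

variable {A B : ℂ[X]}

theorem bezoutDelta_comm (A B : ℂ[X]) : bezoutDelta A B = bezoutDelta B A := by
  simp only [bezoutDelta, add_comm, or_comm]

theorem bezoutDelta_le {z : ℂ} (hz : A.eval z = 0 ∨ B.eval z = 0) :
    bezoutDelta A B ≤ ‖A.eval z‖ + ‖B.eval z‖ :=
  csInf_le ⟨0, by rintro _ ⟨w, -, rfl⟩; positivity⟩ ⟨z, hz, rfl⟩

theorem deltaTilde_nonneg (A B : ℂ[X]) : 0 ≤ deltaTilde A B :=
  Real.iInf_nonneg fun _ => by positivity

theorem deltaTilde_le (z : ℂ) : deltaTilde A B ≤ ‖A.eval z‖ + ‖B.eval z‖ :=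
  ciInf_le ⟨0, by rintro _ ⟨w, rfl⟩; positivity⟩ z

theorem deltaTilde_le_bezoutDelta (h : ∃ z, A.eval z = 0 ∨ B.eval z = 0) :
    deltaTilde A B ≤ bezoutDelta A B := by
  obtain ⟨z, hz⟩ := h
  exact le_csInf ⟨_, z, hz, rfl⟩ (by rintro _ ⟨w, -, rfl⟩; exact deltaTilde_le w)

theorem bezoutDelta_le_two_pow_mul_norm_eval_of_isRoot {z α : ℂ} (hα : A.eval α = 0)
    (hnearest : ∀ β ∈ B.roots, ‖z - α‖ ≤ ‖z - β‖) :
    bezoutDelta A B ≤ 2 ^ B.natDegree * ‖B.eval z‖ :=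
  calc bezoutDelta A B ≤ ‖B.eval α‖ := by simpa [hα] using bezoutDelta_le (B := B) (.inl hα)
    _ ≤ 2 ^ B.natDegree * ‖B.eval z‖ :=
      (IsAlgClosed.splits B).norm_eval_le_two_pow_mul_norm_eval hnearest

theorem bezoutDelta_le_two_pow_mul_norm_add (hA : A ≠ 0) (hB : B ≠ 0) (z : ℂ) :
    bezoutDelta A B ≤ 2 ^ max A.natDegree B.natDegree * (‖A.eval z‖ + ‖B.eval z‖) := by
  rcases (A.roots + B.roots).toFinset.eq_empty_or_nonempty with hempty | hroots
  · have hzeros : {w : ℂ | A.eval w = 0 ∨ B.eval w = 0} = ∅ := by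
      ext w
      simp_all [Finset.ext_iff]
    rw [bezoutDelta, hzeros, Set.image_empty, Real.sInf_empty]
    positivity
  obtain ⟨α, hαroot, hnearest⟩ := (A.roots + B.roots).toFinset.exists_min_image (‖z - ·‖) hroots
  have hnearestA (β) (hβ : β ∈ A.roots) := hnearest β (by simp [hβ])
  have hnearestB (β) (hβ : β ∈ B.roots) := hnearest β (by simp [hβ])
  rcases Multiset.mem_add.mp (Multiset.mem_toFinset.mp hαroot) with hαA | hαB
  · calc bezoutDelta A B ≤ 2 ^ B.natDegree * ‖B.eval z‖ :=
          bezoutDelta_le_two_pow_mul_norm_eval_of_isRoot ((mem_roots hA).mp hαA) hnearestB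
      _ ≤ _ := by gcongr <;> norm_num
  · calc bezoutDelta A B ≤ 2 ^ A.natDegree * ‖A.eval z‖ := by
          rw [bezoutDelta_comm]
          exact bezoutDelta_le_two_pow_mul_norm_eval_of_isRoot ((mem_roots hB).mp hαB) hnearestA
      _ ≤ _ := by gcongr <;> norm_num

theorem bezoutDelta_le_two_pow_mul_deltaTilde (hA : A ≠ 0) (hB : B ≠ 0) :
    bezoutDelta A B ≤ 2 ^ max A.natDegree B.natDegree * deltaTilde A B := by
  rw [← div_le_iff₀' (by positivity)]
  exact le_ciInf fun z => (div_le_iff₀' (by positivity)).mpr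
    (bezoutDelta_le_two_pow_mul_norm_add hA hB z)

end Deltas

theorem deltas_equivalent_general (N K : ℕ) (hN : 1 ≤ N) (hK : 1 ≤ K)
    (A B : Polynomial ℂ) (hA : A.natDegree = N) (hB : B.natDegree = K) :
    bezoutDelta A B / 3 ^ max N K ≤ deltaTilde A B ∧ deltaTilde A B ≤ bezoutDelta A B := by
  have hA0 : A ≠ 0 := ne_zero_of_natDegree_gt (hA ▸ hN : 0 < A.natDegree)
  have hB0 : B ≠ 0 := ne_zero_of_natDegree_gt (hB ▸ hK : 0 < B.natDegree)
  refine ⟨?_, ?_⟩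
  · rw [div_le_iff₀' (by positivity)]
    calc bezoutDelta A B ≤ 2 ^ max N K * deltaTilde A B := by
          simpa [hA, hB] using bezoutDelta_le_two_pow_mul_deltaTilde hA0 hB0
      _ ≤ 3 ^ max N K * deltaTilde A B := by
          gcongr
          · exact deltaTilde_nonneg A B
          · norm_num
  · obtain ⟨z, hz⟩ := Complex.exists_root (natDegree_pos_iff_degree_pos.mp (hA ▸ hN))
    exact deltaTilde_le_bezoutDelta ⟨z, .inl hz⟩

/-- **Equivalence of the two separation quantities:**
`δ(A,B) / 3^(max N K) ≤ δ̃(A,B) ≤ δ(A,B)`. -/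
theorem deltas_equivalent (N K : ℕ) (hN : 1 ≤ N) (hK : 1 ≤ K)
    (A B : Polynomial ℂ) (hA : A.natDegree = N) (hB : B.natDegree = K)
    (hnA : polyNorm A ≤ 1) (hnB : polyNorm B ≤ 1)
    (hcop : ∀ z : ℂ, ¬(A.eval z = 0 ∧ B.eval z = 0)) :
    bezoutDelta A B / 3 ^ max N K ≤ deltaTilde A B ∧ deltaTilde A B ≤ bezoutDelta A B :=
  deltas_equivalent_general N K hN hK A B hA hB
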